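/- For every natural number n there exist integers x, y, z with 24n + 3 = x² + y² + z². -/

import Mathlib

/-!
Let `N ≡ 3 (mod 8)`. By Dirichlet's theorem there is a prime `p` with `N (8k + 1) = 2p + 1`, and
quadratic reciprocity makes `-(8k + 1)` a square modulo `p`; this yields `s, C` with
`s² + 8k + 1 = 2pC`, so that `G = [[2p, s, 0], [s, C, 1], [0, 1, N]]` is a positive definite
integral matrix of determinant `1`. Every such ternary form is integrally equivalent to
`x² + y² + z²`: unimodular changes of basis lower the trace until the form is reduced, and a
reduced form has `G₀₀ G₁₁ G₂₂ ≤ 2 det G`, which for `det G = 1` forces `G = 1`. Hence `G = AᵀA`,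
and `N = G₂₂` is the squared length of a column of `A`.
-/

open Matrix

theorem Matrix.det_fin_three_symm {R : Type*} [CommRing R] (a b c d e f : R) :
    (!![a, d, e; d, b, f; e, f, c]).det =
      a * b * c + 2 * d * e * f - a * f ^ 2 - b * e ^ 2 - c * d ^ 2 := by
  simp [det_fin_three]
  ring

section Inequalities

variable {R : Type*} [CommRing R] [LinearOrder R] [IsStrictOrderedRing R]

theorem mul_mul_le_two_mul_det_of_nonneg {a b c d e f : R} (hd : 0 ≤ d) (he : 0 ≤ e)
    (hf : 0 ≤ f) (hda : 2 * d ≤ a) (hdb : 2 * d ≤ b) (hea : 2 * e ≤ a) (hec : 2 * e ≤ c)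
    (hfb : 2 * f ≤ b) (hfc : 2 * f ≤ c) :
    a * b * c ≤ 2 * (!![a, d, e; d, b, f; e, f, c]).det := by
  have hda' : 0 ≤ a - 2 * d := by linarith
  have hdb' : 0 ≤ b - 2 * d := by linarith
  have hea' : 0 ≤ a - 2 * e := by linarith
  have hec' : 0 ≤ c - 2 * e := by linarith
  have hfb' : 0 ≤ b - 2 * f := by linarith
  have hfc' : 0 ≤ c - 2 * f := by linarith
  rw [det_fin_three_symm]
  nlinarith [mul_nonneg (mul_nonneg hda' hd) he, mul_nonneg (mul_nonneg hda' hec') hd,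
    mul_nonneg (mul_nonneg hdb' hfc') hd, mul_nonneg (mul_nonneg hec' hd) he,
    mul_nonneg (mul_nonneg hda' hdb') hfc', mul_nonneg (mul_nonneg hfb' hd) hf,
    mul_nonneg (mul_nonneg hda' hdb') hec', mul_nonneg (mul_nonneg hda' hfb') hf,
    mul_nonneg (mul_nonneg hdb' hea') he, mul_nonneg (mul_nonneg hdb' hec') hd,
    mul_nonneg (mul_nonneg hea' hfc') hd]

theorem mul_mul_le_two_mul_det_of_nonneg_of_nonpos {a b c d e f : R} (hd : 0 ≤ d) (he : 0 ≤ e)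
    (hf : f ≤ 0) (hda : 2 * d ≤ a) (hdb : 2 * d ≤ b) (hea : 2 * e ≤ a) (hec : 2 * e ≤ c)
    (hfb : -2 * f ≤ b) (hfc : -2 * f ≤ c) (hab : 2 * (d + e - f) ≤ a + b)
    (hac : 2 * (d + e - f) ≤ a + c) (hbc : 2 * (d + e - f) ≤ b + c) :
    a * b * c ≤ 2 * (!![a, d, e; d, b, f; e, f, c]).det := by
  have hf' : 0 ≤ -f := by linarith
  have hda' : 0 ≤ a - 2 * d := by linarith
  have hdb' : 0 ≤ b - 2 * d := by linarith
  have hea' : 0 ≤ a - 2 * e := by linarith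
  have hec' : 0 ≤ c - 2 * e := by linarith
  have hfb' : 0 ≤ b + 2 * f := by linarith
  have hfc' : 0 ≤ c + 2 * f := by linarith
  have hab' : 0 ≤ a + b - 2 * (d + e - f) := by linarith
  have hac' : 0 ≤ a + c - 2 * (d + e - f) := by linarith
  have hbc' : 0 ≤ b + c - 2 * (d + e - f) := by linarith
  rw [det_fin_three_symm]
  nlinarith [mul_nonneg (mul_nonneg hea' hf') hbc', mul_nonneg (mul_nonneg hd he) hac',
    mul_nonneg (mul_nonneg hfb' he) hf', mul_nonneg (mul_nonneg hdb' he) hac',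
    mul_nonneg (mul_nonneg hea' hec') hfb', mul_nonneg (mul_nonneg hdb' hea') hfc',
    mul_nonneg (mul_nonneg hd he) hab', mul_nonneg (mul_nonneg hda' hec') hd,
    mul_nonneg (mul_nonneg hdb' hec') he]

end Inequalities

namespace Matrix

theorem transpose_mul_mul_apply_self {ι R : Type*} [Fintype ι] [CommSemiring R]
    (G P : Matrix ι ι R) (j : ι) :
    (Pᵀ * G * P) j j = (fun k ↦ P k j) ⬝ᵥ G *ᵥ (fun k ↦ P k j) := by
  simp only [mul_apply, transpose_apply, dotProduct, mulVec, Finset.sum_mul, Finset.mul_sum]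
  rw [Finset.sum_comm]
  exact Finset.sum_congr rfl fun _ _ ↦ Finset.sum_congr rfl fun _ _ ↦ by ring

variable {ι : Type*} [Fintype ι] [DecidableEq ι]

theorem det_one_updateCol {R : Type*} [CommRing R] (i : ι) (v : ι → R) :
    ((1 : Matrix ι ι R).updateCol i v).det = v i := by
  rw [← cramer_apply, cramer_one, Module.End.one_apply]

theorem trace_transpose_mul_mul_one_updateCol {R : Type*} [CommRing R] (G : Matrix ι ι R)
    (i : ι) (v : ι → R) :
    (((1 : Matrix ι ι R).updateCol i v)ᵀ * G * (1 : Matrix ι ι R).updateCol i v).trace =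
      G.trace - G i i + v ⬝ᵥ G *ᵥ v := by
  have hcol : ∀ j ≠ i, (fun k ↦ (1 : Matrix ι ι R).updateCol i v k j) = Pi.single j 1 := by
    intro j hj
    ext k
    simp [hj, one_apply, Pi.single_apply, eq_comm]
  simp only [trace, diag, transpose_mul_mul_apply_self]
  rw [← Finset.add_sum_erase _ _ (Finset.mem_univ i),
    ← Finset.add_sum_erase _ _ (Finset.mem_univ i),
    Finset.sum_congr rfl fun j hj ↦ by rw [hcol j (Finset.ne_of_mem_erase hj)]]
  simp only [updateCol_self, mulVec_single, MulOpposite.op_one, one_smul, single_dotProduct,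
    col_apply, one_mul, Finset.mem_univ, Finset.sum_erase_eq_sub]
  ring

theorem PosDef.transpose_mul_mul {R : Type*} [CommRing R] [PartialOrder R] [StarRing R]
    [TrivialStar R] {G P : Matrix ι ι R} (hG : G.PosDef) (hP : IsUnit P) :
    (Pᵀ * G * P).PosDef := by
  simpa [star_eq_conjTranspose] using (IsUnit.posDef_star_left_conjugate_iff hP).mpr hG

/-- A weak form of Minkowski reduction: replacing the `i`-th basis vector by `v` (still a basis,
as `v i = ±1`) does not lower the `i`-th diagonal entry. -/
def IsReduced (G : Matrix ι ι ℤ) : Prop :=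
  ∀ i (v : ι → ℤ), |v i| = 1 → (∀ j, |v j| ≤ 1) → G i i ≤ v ⬝ᵥ G *ᵥ v

theorem exists_isUnit_trace_conj_lt_of_not_isReduced {G : Matrix ι ι ℤ} (h : ¬ G.IsReduced) :
    ∃ P : Matrix ι ι ℤ, IsUnit P ∧ (Pᵀ * G * P).trace < G.trace := by
  simp only [IsReduced, not_forall, not_le] at h
  obtain ⟨i, v, hvi, -, hlt⟩ := h
  refine ⟨(1 : Matrix ι ι ℤ).updateCol i v, ?_, ?_⟩
  · rwa [isUnit_iff_isUnit_det, det_one_updateCol, Int.isUnit_iff_abs_eq]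
  · rw [trace_transpose_mul_mul_one_updateCol]
    linarith

theorem PosDef.exists_isUnit_isReduced_conj {G : Matrix ι ι ℤ} (hG : G.PosDef) :
    ∃ P : Matrix ι ι ℤ, IsUnit P ∧ (Pᵀ * G * P).IsReduced := by
  induction h : G.trace.toNat using Nat.strong_induction_on generalizing G with
  | _ k ih =>
  by_cases hred : G.IsReduced
  · exact ⟨1, isUnit_one, by simpa using hred⟩
  obtain ⟨P, hP, hlt⟩ := exists_isUnit_trace_conj_lt_of_not_isReduced hred
  have hnonneg : 0 ≤ (Pᵀ * G * P).trace :=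
    Finset.sum_nonneg fun _ _ ↦ (hG.transpose_mul_mul hP).diag_pos.le
  obtain ⟨Q, hQ, hQred⟩ := ih _ (by omega) (hG.transpose_mul_mul hP) rfl
  refine ⟨P * Q, hP.mul hQ, ?_⟩
  simpa [transpose_mul, Matrix.mul_assoc] using hQred

theorem IsReduced.diagonal_mul_mul {G : Matrix ι ι ℤ} (h : G.IsReduced) {σ : ι → ℤ}
    (hσ : ∀ i, |σ i| = 1) : (diagonal σ * G * diagonal σ).IsReduced := by
  intro i v hvi hv
  have hσσ : ∀ i, σ i * σ i = 1 := fun i ↦ by rw [← abs_mul_abs_self, hσ i, one_mul]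
  have := h i (σ * v) (by simp [abs_mul, hσ, hvi]) (fun j ↦ by simp [abs_mul, hσ, hv j])
  convert this using 1
  · simp [diagonal_mul, mul_diagonal, mul_right_comm _ (G i i), hσσ]
  · have hD (w : ι → ℤ) : diagonal σ *ᵥ w = σ * w := funext (mulVec_diagonal σ w)
    simp only [← mulVec_mulVec, hD, dotProduct, Pi.mul_apply, mul_left_comm (σ _), mul_assoc]

theorem IsReduced.two_mul_abs_le {G : Matrix ι ι ℤ} (h : G.IsReduced) (hG : G.IsSymm) {i j : ι}
    (hij : i ≠ j) : 2 * |G i j| ≤ G i i := by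
  have key : ∀ s : ℤ, |s| = 1 → 0 ≤ G i i + 2 * s * G i j := by
    intro s hs
    have := h j (Pi.single j 1 + Pi.single i s) (by simp [hij.symm]) fun k ↦ by
      by_cases hk : k = i <;> by_cases hk' : k = j <;> simp_all
    have hss : s * s = 1 := by rw [← abs_mul_abs_self, hs, one_mul]
    simp only [mulVec_add, mulVec_single, MulOpposite.op_one, one_smul, op_smul_eq_smul,
      zsmul_eq_mul, dotProduct_add, add_dotProduct, single_dotProduct, col_apply, one_mul,
      Pi.mul_apply, Pi.intCast_apply, Int.cast_eq, hG.apply i j, ← mul_assoc, hss] at this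
    linarith
  have := key 1 (by simp)
  have := key (-1) (by simp)
  cases abs_cases (G i j) <;> linarith

theorem IsReduced.two_mul_abs_le_fin_three {a b c d e f : ℤ}
    (h : IsReduced !![a, d, e; d, b, f; e, f, c]) :
    2 * |d| ≤ a ∧ 2 * |d| ≤ b ∧ 2 * |e| ≤ a ∧ 2 * |e| ≤ c ∧
      2 * |f| ≤ b ∧ 2 * |f| ≤ c := by
  have hsymm : (!![a, d, e; d, b, f; e, f, c]).IsSymm := by
    ext i j; fin_cases i <;> fin_cases j <;> rfl
  refine ⟨?_, ?_, ?_, ?_, ?_, ?_⟩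
  · simpa using h.two_mul_abs_le hsymm (i := 0) (j := 1) (by decide)
  · simpa using h.two_mul_abs_le hsymm (i := 1) (j := 0) (by decide)
  · simpa using h.two_mul_abs_le hsymm (i := 0) (j := 2) (by decide)
  · simpa using h.two_mul_abs_le hsymm (i := 2) (j := 0) (by decide)
  · simpa using h.two_mul_abs_le hsymm (i := 1) (j := 2) (by decide)
  · simpa using h.two_mul_abs_le hsymm (i := 2) (j := 1) (by decide)

theorem IsReduced.mul_mul_le_two_mul_det {a b c d e f : ℤ}
    (h : IsReduced !![a, d, e; d, b, f; e, f, c]) :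
    a * b * c ≤ 2 * (!![a, d, e; d, b, f; e, f, c]).det := by
  -- Changing the sign of a basis vector keeps the form reduced, so we may take `d, e ≥ 0`.
  wlog hd : 0 ≤ d generalizing d f
  · have := this (d := -d) (f := -f) ?_ (by linarith)
    · simpa [det_fin_three_symm] using this
    · convert h.diagonal_mul_mul (σ := ![1, -1, 1]) ?_ using 1
      · ext i j; fin_cases i <;> fin_cases j <;> simp
      · intro i; fin_cases i <;> simp
  wlog he : 0 ≤ e generalizing e f
  · have := this (e := -e) (f := -f) ?_ (by linarith)
    · simpa [det_fin_three_symm] using this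
    · convert h.diagonal_mul_mul (σ := ![1, 1, -1]) ?_ using 1
      · ext i j; fin_cases i <;> fin_cases j <;> simp
      · intro i; fin_cases i <;> simp
  obtain ⟨hda, hdb, hea, hec, hfb, hfc⟩ := h.two_mul_abs_le_fin_three
  rw [abs_of_nonneg hd] at hda hdb
  rw [abs_of_nonneg he] at hea hec
  rcases le_total 0 f with hf | hf
  · rw [abs_of_nonneg hf] at hfb hfc
    exact mul_mul_le_two_mul_det_of_nonneg hd he hf hda hdb hea hec hfb hfc
  · rw [abs_of_nonpos hf] at hfb hfc
    have hv : ∀ j, |![(-1 : ℤ), 1, 1] j| ≤ 1 := by decide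
    have h₀ := h 0 ![-1, 1, 1] (by decide) hv
    have h₁ := h 1 ![-1, 1, 1] (by decide) hv
    have h₂ := h 2 ![-1, 1, 1] (by decide) hv
    simp only [Fin.isValue, of_apply, cons_val', cons_val_zero, cons_val_fin_one, dotProduct,
      Int.reduceNeg, mulVec, Fin.sum_univ_three, mul_neg, mul_one, cons_val_one, cons_val, neg_mul,
      one_mul, neg_add_rev, neg_neg] at h₀ h₁ h₂
    exact mul_mul_le_two_mul_det_of_nonneg_of_nonpos hd he hf hda hdb hea hec (by linarith)
      (by linarith) (by linarith) (by linarith) (by linarith)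

theorem IsReduced.eq_one {G : Matrix (Fin 3) (Fin 3) ℤ} (h : G.IsReduced) (hG : G.PosDef)
    (hdet : G.det = 1) : G = 1 := by
  have hsymm : G.IsSymm := isHermitian_iff_isSymm.mp hG.isHermitian
  obtain ⟨a, b, c, d, e, f, rfl⟩ : ∃ a b c d e f, G = !![a, d, e; d, b, f; e, f, c] :=
    ⟨G 0 0, G 1 1, G 2 2, G 0 1, G 0 2, G 1 2, by
      ext i j
      fin_cases i <;> fin_cases j <;> simp [hsymm.apply 0 1, hsymm.apply 0 2, hsymm.apply 1 2]⟩
  have ha : 0 < a := by simpa using hG.diag_pos (i := 0)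
  have hb : 0 < b := by simpa using hG.diag_pos (i := 1)
  have hc : 0 < c := by simpa using hG.diag_pos (i := 2)
  have habc : a * b * c ≤ 2 := by simpa [hdet] using h.mul_mul_le_two_mul_det
  obtain ⟨hda, hdb, hea, hec, hfb, hfc⟩ := h.two_mul_abs_le_fin_three
  -- An off-diagonal entry `≠ 0` would force two diagonal entries `≥ 2`.
  have hd : d = 0 := by
    by_contra hd
    have := Int.one_le_abs hd
    nlinarith [mul_le_mul_of_nonneg_right (show 2 * 2 ≤ a * b by nlinarith) hc.le]
  have he : e = 0 := by
    by_contra he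
    have := Int.one_le_abs he
    nlinarith [mul_le_mul_of_nonneg_left (show 2 * 2 ≤ c * a by nlinarith) hb.le]
  have hf : f = 0 := by
    by_contra hf
    have := Int.one_le_abs hf
    nlinarith [mul_le_mul_of_nonneg_left (show 2 * 2 ≤ b * c by nlinarith) ha.le]
  subst hd he hf
  replace hdet : a * b * c = 1 := by simpa [det_fin_three_symm] using hdet
  have hab := Int.eq_one_of_mul_eq_one_right (mul_nonneg ha.le hb.le) hdet
  obtain rfl := Int.eq_one_of_mul_eq_one_left hc.le hdet
  obtain rfl := Int.eq_one_of_mul_eq_one_right ha.le hab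
  obtain rfl := Int.eq_one_of_mul_eq_one_left hb.le hab
  exact one_fin_three.symm

theorem PosDef.exists_eq_transpose_mul_self_of_det_eq_one {G : Matrix (Fin 3) (Fin 3) ℤ}
    (hG : G.PosDef) (hdet : G.det = 1) : ∃ A : Matrix (Fin 3) (Fin 3) ℤ, G = Aᵀ * A := by
  obtain ⟨P, hP, hred⟩ := hG.exists_isUnit_isReduced_conj
  have hPdet : IsUnit P.det := (isUnit_iff_isUnit_det P).mp hP
  have hone : Pᵀ * G * P = 1 := by
    refine hred.eq_one (hG.transpose_mul_mul hP) ?_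
    rw [det_mul, det_mul, det_transpose, hdet, mul_one, Int.isUnit_mul_self hPdet]
  refine ⟨P⁻¹, ?_⟩
  calc G = (P * P⁻¹)ᵀ * G * (P * P⁻¹) := by simp [mul_nonsing_inv _ hPdet]
    _ = (P⁻¹)ᵀ * (Pᵀ * G * P) * P⁻¹ := by simp only [transpose_mul, Matrix.mul_assoc]
    _ = (P⁻¹)ᵀ * P⁻¹ := by rw [hone, Matrix.mul_one]

theorem PosDef.exists_sq_add_sq_add_sq_of_det_eq_one {G : Matrix (Fin 3) (Fin 3) ℤ}
    (hG : G.PosDef) (hdet : G.det = 1) (i : Fin 3) :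
    ∃ x y z : ℤ, G i i = x ^ 2 + y ^ 2 + z ^ 2 := by
  obtain ⟨A, rfl⟩ := hG.exists_eq_transpose_mul_self_of_det_eq_one hdet
  exact ⟨A 0 i, A 1 i, A 2 i, by simp [mul_apply, Fin.sum_univ_three, sq]⟩

theorem posDef_fin_three_of_minors_pos {R : Type*} [CommRing R] [LinearOrder R]
    [IsStrictOrderedRing R] [StarRing R] [TrivialStar R] {a b c d e f : R} (ha : 0 < a)
    (hab : 0 < a * b - d ^ 2) (hdet : 0 < (!![a, d, e; d, b, f; e, f, c]).det) :
    (!![a, d, e; d, b, f; e, f, c]).PosDef := by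
  refine PosDef.of_dotProduct_mulVec_pos (isHermitian_iff_isSymm.mpr ?_) fun v hv ↦ ?_
  · ext i j; fin_cases i <;> fin_cases j <;> rfl
  set Δ := (!![a, d, e; d, b, f; e, f, c]).det with hΔ
  rw [det_fin_three_symm] at hΔ
  simp only [Fin.isValue, of_apply, cons_val', cons_val_zero, cons_val_fin_one, cons_val_one,
    cons_val, dotProduct, Pi.star_apply, star_trivial, mulVec, Fin.sum_univ_three]
  set x := v 0
  set y := v 1
  set z := v 2
  set δ := a * b - d ^ 2
  -- Lagrange's completion of squares
  have key : a * δ * (x * (a * x + d * y + e * z) + y * (d * x + b * y + f * z) +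
      z * (e * x + f * y + c * z)) =
      δ * (a * x + d * y + e * z) ^ 2 + (δ * y + (a * f - d * e) * z) ^ 2 + a * Δ * z ^ 2 := by
    rw [hΔ]; ring
  refine pos_of_mul_pos_right (key ▸ ?_) (mul_pos ha hab).le
  have h₁ := mul_nonneg hab.le (sq_nonneg (a * x + d * y + e * z))
  have h₂ := sq_nonneg (δ * y + (a * f - d * e) * z)
  rcases eq_or_ne z 0 with hz | hz
  · rcases eq_or_ne y 0 with hy | hy
    · have hx : x ≠ 0 := fun hx ↦ hv (funext fun i ↦ by fin_cases i <;> assumption)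
      have : 0 < δ * (a * x) ^ 2 := by positivity
      simpa [hz, hy] using this
    · have : 0 < (δ * y) ^ 2 := by positivity
      simpa [hz] using add_pos_of_nonneg_of_pos h₁ this
  · have : 0 < a * Δ * z ^ 2 := by positivity
    linarith

end Matrix

theorem exists_prime_mul_eight_mul_add_one_eq {N : ℕ} (hN : N % 8 = 3) :
    ∃ p k : ℕ, p.Prime ∧ N * (8 * k + 1) = 2 * p + 1 := by
  obtain ⟨q, rfl⟩ : ∃ q, N = 8 * q + 3 := ⟨N / 8, by omega⟩
  have hunit : IsUnit ((4 * q + 1 : ℕ) : ZMod (4 * (8 * q + 3))) := by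
    refine IsUnit.of_mul_eq_one ((8 * q + 1 : ℕ) : ZMod (4 * (8 * q + 3))) ?_
    rw [← Nat.cast_mul, show (4 * q + 1) * (8 * q + 1) = q * (4 * (8 * q + 3)) + 1 by ring,
      Nat.cast_add, Nat.cast_mul, ZMod.natCast_self, mul_zero, zero_add, Nat.cast_one]
  obtain ⟨p, -, hp, hp_mod⟩ := Nat.forall_exists_prime_gt_and_eq_mod hunit 0
  rw [ZMod.natCast_eq_natCast_iff', Nat.mod_eq_of_lt (by omega : 4 * q + 1 < 4 * (8 * q + 3))]
    at hp_mod
  obtain ⟨k, hk⟩ : ∃ k, p = 4 * (8 * q + 3) * k + (4 * q + 1) :=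
    ⟨p / (4 * (8 * q + 3)), by rw [← hp_mod, Nat.div_add_mod]⟩
  exact ⟨p, k, hp, by rw [hk]; ring⟩

theorem isSquare_neg_natCast_of_dvd_two_mul_add_one {p m : ℕ} [Fact p.Prime] (hp : p % 4 = 1)
    (hm : m % 8 = 1) (hdvd : m ∣ 2 * p + 1) : IsSquare (-(m : ZMod p)) := by
  have hm_odd : Odd m := Nat.odd_iff.mpr (by omega)
  have hp2 : p ≠ 2 := by omega
  have hJ : jacobiSym p m = 1 := by
    have h2p : (2 * p : ℤ) ≡ -1 [ZMOD m] := by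
      refine (Int.modEq_iff_dvd.mpr ?_).symm
      obtain ⟨c, hc⟩ := hdvd
      exact ⟨c, by rw [sub_neg_eq_add]; exact_mod_cast hc⟩
    have := jacobiSym.mod_left' h2p
    rwa [jacobiSym.mul_left, jacobiSym.at_two hm_odd, jacobiSym.at_neg_one hm_odd,
      ZMod.χ₈_nat_eq_if_mod_eight, ZMod.χ₄_nat_eq_if_mod_four, if_neg (by omega),
      if_pos (by omega), if_neg (by omega), if_pos (by omega), one_mul] at this
  have hL : legendreSym p (-m) = 1 := by
    rw [neg_eq_neg_one_mul, legendreSym.mul, legendreSym.at_neg_one hp2,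
      ZMod.χ₄_nat_eq_if_mod_four, if_neg (by omega), if_pos hp, one_mul,
      jacobiSym.legendreSym.to_jacobiSym,
      ← jacobiSym.quadratic_reciprocity_one_mod_four hp hm_odd, hJ]
  have hne : ((-m : ℤ) : ZMod p) ≠ 0 := by
    rw [Int.cast_neg, neg_ne_zero, Int.cast_natCast, Ne, ZMod.natCast_eq_zero_iff]
    intro hpm
    exact (Fact.out : p.Prime).one_lt.ne'
      (Nat.dvd_one.mp ((Nat.dvd_add_right (dvd_mul_left p 2)).mp (hpm.trans hdvd)))
  simpa using (legendreSym.eq_one_iff p hne).mp hL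

theorem exists_sq_add_eq_two_mul_mul {p m : ℕ} [Fact p.Prime] (hp : p ≠ 2) (hm : Odd m)
    (h : IsSquare (-(m : ZMod p))) : ∃ s C : ℤ, s ^ 2 + m = 2 * p * C := by
  obtain ⟨y, hy⟩ := h
  have hp_odd : Odd (p : ℤ) := by exact_mod_cast (Fact.out : p.Prime).odd_of_ne_two hp
  have hdvd : (p : ℤ) ∣ (y.val : ℤ) ^ 2 + m := by
    rw [← ZMod.intCast_zmod_eq_zero_iff_dvd]
    push_cast
    rw [ZMod.natCast_zmod_val, sq, ← hy, neg_add_cancel]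
  obtain ⟨s, hs_odd, hs⟩ : ∃ s : ℤ, Odd s ∧ (p : ℤ) ∣ s ^ 2 + m := by
    rcases Int.even_or_odd (y.val : ℤ) with hy_even | hy_odd
    · exact ⟨y.val + p, hy_even.add_odd hp_odd,
        (dvd_add hdvd (dvd_mul_left (p : ℤ) (2 * y.val + p))).trans (by ring_nf; rfl)⟩
    · exact ⟨y.val, hy_odd, hdvd⟩
  have h2 : (2 : ℤ) ∣ s ^ 2 + m := (hs_odd.pow.add_odd (by exact_mod_cast hm)).two_dvd
  obtain ⟨C, hC⟩ := (Int.isCoprime_two_left.mpr hp_odd).mul_dvd h2 hs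
  exact ⟨s, C, by rw [hC, mul_assoc]⟩

theorem exists_sq_add_sq_add_sq_of_mod_eight_eq_three {N : ℕ} (hN : N % 8 = 3) :
    ∃ x y z : ℤ, (N : ℤ) = x ^ 2 + y ^ 2 + z ^ 2 := by
  obtain ⟨p, k, hp, hNpk⟩ := exists_prime_mul_eight_mul_add_one_eq hN
  have : Fact p.Prime := ⟨hp⟩
  have hp4 : p % 4 = 1 := by
    obtain ⟨q, rfl⟩ : ∃ q, N = 8 * q + 3 := ⟨N / 8, by omega⟩
    have : 2 * p + 1 = 8 * (8 * q * k + q + 3 * k) + 3 := by rw [← hNpk]; ring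
    omega
  obtain ⟨s, C, hsC⟩ := exists_sq_add_eq_two_mul_mul (m := 8 * k + 1) (by omega)
    (Nat.odd_iff.mpr (by omega))
    (isSquare_neg_natCast_of_dvd_two_mul_add_one hp4 (by omega) (Dvd.intro_left N hNpk))
  push_cast at hsC
  have hNpkZ : (N : ℤ) * (8 * k + 1) = 2 * p + 1 := by exact_mod_cast hNpk
  have hdet : (!![2 * (p : ℤ), s, 0; s, C, 1; 0, 1, (N : ℤ)]).det = 1 := by
    rw [det_fin_three_symm]
    linear_combination -N * hsC + hNpkZ
  have hG : (!![2 * (p : ℤ), s, 0; s, C, 1; 0, 1, (N : ℤ)]).PosDef :=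
    posDef_fin_three_of_minors_pos (by have := hp.pos; omega) (by linarith)
      (by rw [hdet]; exact one_pos)
  obtain ⟨x, y, z, hxyz⟩ := hG.exists_sq_add_sq_add_sq_of_det_eq_one hdet 2
  exact ⟨x, y, z, by simpa using hxyz⟩

theorem stmt13 (n : ℕ) : ∃ x y z : ℤ, 24 * (n : ℤ) + 3 = x ^ 2 + y ^ 2 + z ^ 2 := by
  simpa using exists_sq_add_sq_add_sq_of_mod_eight_eq_three (N := 24 * n + 3) (by omega)
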